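/- Let X_1,…,X_n be drawn from a product distribution on 𝒳^n and let M be a k-pass streaming algorithm with private randomness. Then for all i ∈ {0,1,…,k-1} and all j ∈ [n]: I(X_j; M_{(i+1,j-1)} | M_{≤i}, M_{(≤i,j-1)}) = 0. -/

import Mathlib

open scoped Classical
open Finset

noncomputable section

namespace MultiPassIC

/-- Probability of an event under a probability mass function `p` on a finite sample space. -/
def pr {Ω : Type} [Fintype Ω] (p : Ω → ℝ) (E : Ω → Prop) : ℝ :=
  ∑ ω, if E ω then p ω else 0

/-- `p` is a probability mass function on the finite type `Ω`. -/
structure IsPMF {Ω : Type} [Fintype Ω] (p : Ω → ℝ) : Prop where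
  nonneg : ∀ ω, 0 ≤ p ω
  sum_one : ∑ ω, p ω = 1

/-- Shannon entropy (base 2) of the random variable `A` under `p`. -/
def H {Ω : Type} [Fintype Ω] {α : Type} [Fintype α] (p : Ω → ℝ) (A : Ω → α) : ℝ :=
  -∑ a, pr p (fun ω => A ω = a) * Real.logb 2 (pr p (fun ω => A ω = a))

/-- Conditional mutual information `I(A ; B ∣ C)` (base 2), with the usual conventions
for vanishing probabilities. -/
def condMI {Ω : Type} [Fintype Ω] {α β γ : Type} [Fintype α] [Fintype β] [Fintype γ]
    (p : Ω → ℝ) (A : Ω → α) (B : Ω → β) (C : Ω → γ) : ℝ :=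
  ∑ a, ∑ b, ∑ c,
    pr p (fun ω => A ω = a ∧ B ω = b ∧ C ω = c) *
      Real.logb 2 ((pr p (fun ω => C ω = c) *
          pr p (fun ω => A ω = a ∧ B ω = b ∧ C ω = c)) /
        (pr p (fun ω => A ω = a ∧ C ω = c) * pr p (fun ω => B ω = b ∧ C ω = c)))

/-- Mutual information `I(A ; B)` (base 2). -/
def MI {Ω : Type} [Fintype Ω] {α β : Type} [Fintype α] [Fintype β]
    (p : Ω → ℝ) (A : Ω → α) (B : Ω → β) : ℝ :=
  condMI p A B (fun _ => (0 : Fin 1))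

/-- `X 0, …, X (n-1)` (the first `n` stream elements) are mutually independent under `p`,
i.e. they are drawn from a product distribution. -/
def IsProduct {Ω : Type} [Fintype Ω] {𝒳 : Type} (p : Ω → ℝ) (n : ℕ) (X : ℕ → Ω → 𝒳) : Prop :=
  ∀ x : ℕ → 𝒳,
    pr p (fun ω => ∀ j < n, X j ω = x j) =
      ∏ j ∈ Finset.range n, pr p (fun ω => X j ω = x j)

/-- A `k`-pass streaming algorithm on the input stream `X 0, …, X (n-1)` (0-indexed;
the paper's `X_j` is `X (j-1)`), over a finite sample space `Ω` with pmf `p`.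
`S` is the finite set of memory states, `Rv` the value space of the per-step private
randomness, `init` the initial memory state `M₀`, `R i j` the private randomness used at
step `j` of pass `i` (0-indexed), and `f i j` the corresponding transition function.
The field `indep` states that the initial state, all the per-step random seeds, and the
input stream are mutually independent. -/
structure Alg (Ω : Type) [Fintype Ω] (p : Ω → ℝ) (𝒳 : Type) [Fintype 𝒳]
    (n k : ℕ) (X : ℕ → Ω → 𝒳) where
  S : Type
  fintS : Fintype S
  Rv : Type
  fintR : Fintype Rv
  init : Ω → S
  R : ℕ → ℕ → Ω → Rv
  f : ℕ → ℕ → 𝒳 → S → Rv → S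
  indep : ∀ (m : S) (r : ℕ → ℕ → Rv) (x : ℕ → 𝒳),
    pr p (fun ω => init ω = m ∧ (∀ i < k, ∀ j < n, R i j ω = r i j) ∧ (∀ j < n, X j ω = x j))
      = pr p (fun ω => init ω = m)
        * (∏ i ∈ Finset.range k, ∏ j ∈ Finset.range n, pr p (fun ω => R i j ω = r i j))
        * pr p (fun ω => ∀ j < n, X j ω = x j)

attribute [instance] Alg.fintS Alg.fintR

variable {Ω : Type} [Fintype Ω] {p : Ω → ℝ} {𝒳 : Type} [Fintype 𝒳] {n k : ℕ} {X : ℕ → Ω → 𝒳}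

/-- Running pass `i` (0-indexed) of the algorithm for `j` steps starting from `ini`. -/
def Alg.runPass (M : Alg Ω p 𝒳 n k X) (i : ℕ) (ini : Ω → M.S) : ℕ → Ω → M.S
  | 0 => ini
  | j + 1 => fun ω =>
      if j < n ∧ i < k then
        M.f i j (X j ω) (M.runPass i ini j ω) (M.R i j ω)
      else M.runPass i ini j ω

/-- `M.passEnd i` is the memory state at the end of pass `i`; `M.passEnd 0 = M₀` is the
initial state, and `M.passEnd i` is the paper's `M_i = M_{(i,n)}`. -/
def Alg.passEnd (M : Alg Ω p 𝒳 n k X) : ℕ → Ω → M.S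
  | 0 => M.init
  | i + 1 => M.runPass i (M.passEnd i) n

/-- `M.st i j` is the memory state after reading `j` elements in pass `i+1`;
it is the paper's `M_{(i+1, j)}`. -/
def Alg.st (M : Alg Ω p 𝒳 n k X) (i j : ℕ) : Ω → M.S :=
  M.runPass i (M.passEnd i) j

/-- The multi-pass information cost
`MIC(M, μ) = Σ_{i=1}^{k} Σ_{j=1}^{n} Σ_{ℓ=1}^{j} I(M_{(i,j)}; X_ℓ | M_{(≤i,ℓ-1)}, M_{(≤i-1,j)})
  + Σ_{i=1}^{k} Σ_{j=1}^{n} Σ_{ℓ=j+1}^{n} I(M_{(i,j)}; X_ℓ | M_{(≤i-1,ℓ-1)}, M_{(≤i-1,j)})`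
(all summation indices below are 0-indexed shifts of the paper's 1-indexed ones). -/
def Alg.MIC (M : Alg Ω p 𝒳 n k X) : ℝ :=
  (∑ i ∈ Finset.range k, ∑ j ∈ Finset.range n, ∑ l ∈ Finset.range (j + 1),
    condMI p (M.st i (j + 1)) (X l)
      (fun ω => ((fun r : Fin (i + 1) => M.st r.1 l ω),
                 (fun r : Fin i => M.st r.1 (j + 1) ω))))
  + (∑ i ∈ Finset.range k, ∑ j ∈ Finset.range n, ∑ l ∈ Finset.Ico (j + 1) n,
    condMI p (M.st i (j + 1)) (X l)
      (fun ω => ((fun r : Fin i => M.st r.1 l ω),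
                 (fun r : Fin i => M.st r.1 (j + 1) ω))))

/-- The conditional information cost
`MIC_cond(M, μ) = Σ_{j=1}^{n} Σ_{ℓ=1}^{j} I(M_{(≤k,j)}; X_ℓ | M_{<k}, M_{(≤k,ℓ-1)})`. -/
def Alg.MICcond (M : Alg Ω p 𝒳 n k X) : ℝ :=
  ∑ j ∈ Finset.range n, ∑ l ∈ Finset.range (j + 1),
    condMI p (fun ω => fun r : Fin k => M.st r.1 (j + 1) ω) (X l)
      (fun ω => ((fun r : Fin k => M.passEnd r.1 ω),
                 (fun r : Fin k => M.st r.1 l ω)))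

end MultiPassIC

/-!
Everything in the statement is a function of the initial state `M₀` and of the table whose
column `u` is the input `X u` together with the randomness that every pass uses at step `u`;
by the hypotheses, `M₀` and the `n` columns are mutually independent. Fix values `c` of the
conditioning variable (the pass-start states `M_0, …, M_i` and the states of the passes before
`i + 1` after `j - 1` steps) and `b` of `M_{(i+1,j-1)}`, and cut every pass at position `j - 1`.
The event `(X_j, M_{(i+1,j-1)}, c) = (a, b, c)` becomes `M₀ = c₀`, a condition on the columns
before `j - 1` (the first halves of the passes reach the recorded states) that involves `b` but
not `a`, and a condition on the remaining columns (the value `a` of `X_j`, and the second halves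
of the passes reach the next recorded pass-start states) that does not involve `b`. So the joint
law factors as `g(a, c) f(b, c)`, and the conditional mutual information vanishes.
-/

namespace MultiPassIC

section Probability

variable {Ω : Type} [Fintype Ω] {p : Ω → ℝ}

theorem IsPMF.nonempty (hp : IsPMF p) : Nonempty Ω := by
  by_contra h
  rw [not_nonempty_iff] at h
  simpa using hp.sum_one

theorem pr_congr {E F : Ω → Prop} (h : ∀ ω, E ω ↔ F ω) : pr p E = pr p F := by
  simp only [pr, h]

theorem sum_pr_and_eq {β : Type} [Fintype β] (E : Ω → Prop) (B : Ω → β) :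
    ∑ b, pr p (fun ω => E ω ∧ B ω = b) = pr p E := by
  unfold pr
  rw [Finset.sum_comm]
  refine Finset.sum_congr rfl fun ω _ => ?_
  by_cases hE : E ω <;> simp [hE]

theorem sum_pr_eq_one (hp : IsPMF p) {β : Type} [Fintype β] (B : Ω → β) :
    ∑ b, pr p (fun ω => B ω = b) = 1 := by
  simpa [pr, hp.sum_one] using sum_pr_and_eq (p := p) (fun _ => True) B

theorem pr_comp_eq_sum {β : Type} [Fintype β] (Y : Ω → β) (G : β → Prop) :
    pr p (fun ω => G (Y ω)) = ∑ y, if G y then pr p (fun ω => Y ω = y) else 0 := by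
  rw [← sum_pr_and_eq _ Y]
  refine Finset.sum_congr rfl fun y _ => ?_
  split_ifs with hy
  · exact pr_congr fun ω => ⟨And.right, fun h => ⟨h ▸ hy, h⟩⟩
  · simp only [pr]
    exact Finset.sum_eq_zero fun ω _ => if_neg fun ⟨hG, hY⟩ => hy (hY ▸ hG)

theorem pr_and_eq_mul_of_pi_law {ι β : Type} [Fintype ι] [Fintype β] (hp : IsPMF p)
    (Y : Ω → ι → β) (w : ι → β → ℝ) (hY : ∀ z, pr p (fun ω => Y ω = z) = ∏ u, w u (z u))
    (T : ι → Prop) (G H : (ι → β) → Prop)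
    (hG : ∀ z z', (∀ u, T u → z u = z' u) → (G z ↔ G z'))
    (hH : ∀ z z', (∀ u, ¬ T u → z u = z' u) → (H z ↔ H z')) :
    pr p (fun ω => G (Y ω) ∧ H (Y ω)) = pr p (fun ω => G (Y ω)) * pr p (fun ω => H (Y ω)) := by
  set W : (ι → β) → ℝ := fun z => pr p (fun ω => Y ω = z)
  let glue : (ι → β) → (ι → β) → ι → β := fun z z' u => if T u then z u else z' u
  let swap : (ι → β) × (ι → β) → (ι → β) × (ι → β) := fun q => (glue q.1 q.2, glue q.2 q.1)
  have hswap : Function.Involutive swap := fun q => by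
    ext u <;> by_cases hu : T u <;> simp [swap, glue, hu]
  -- exchanging the `T`-coordinates of two samples preserves their joint product weight
  have hW : ∀ z z', W z * W z' = W (glue z z') * W (glue z' z) := fun z z' => by
    simp only [W, hY, ← Finset.prod_mul_distrib]
    refine Finset.prod_congr rfl fun u _ => ?_
    by_cases hu : T u <;> simp [glue, hu, mul_comm]
  have hsum : ∑ z, W z = 1 := sum_pr_eq_one hp Y
  calc pr p (fun ω => G (Y ω) ∧ H (Y ω))
      = ∑ q : (ι → β) × (ι → β), (if G q.1 ∧ H q.1 then W q.1 else 0) * W q.2 := by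
        rw [pr_comp_eq_sum Y (fun z => G z ∧ H z), Fintype.sum_prod_type]
        simp only [← Finset.mul_sum, hsum, mul_one, W]
        congr! 2
    _ = ∑ q : (ι → β) × (ι → β), (if G (swap q).1 ∧ H (swap q).1 then W (swap q).1 else 0)
          * W (swap q).2 := (Equiv.sum_comp (hswap.toPerm swap) _).symm
    _ = ∑ q : (ι → β) × (ι → β), (if G q.1 then W q.1 else 0) * (if H q.2 then W q.2 else 0) := by
        refine Finset.sum_congr rfl fun ⟨z, z'⟩ _ => ?_
        have hGz : G (glue z z') ↔ G z := hG _ _ fun u hu => by simp [glue, hu]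
        have hHz : H (glue z z') ↔ H z' := hH _ _ fun u hu => by simp [glue, hu]
        simp only [swap, hGz, hHz, ite_mul, zero_mul, ← hW]
        by_cases hz : G z <;> simp [hz]
    _ = pr p (fun ω => G (Y ω)) * pr p (fun ω => H (Y ω)) := by
        rw [pr_comp_eq_sum, pr_comp_eq_sum, Finset.sum_mul_sum, Fintype.sum_prod_type]

theorem pr_and_comp_eq_mul {β : Type} [Fintype β] (E : Ω → Prop) (V : Ω → β)
    (hEV : ∀ v, pr p (fun ω => E ω ∧ V ω = v) = pr p E * pr p (fun ω => V ω = v))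
    (Q : β → Prop) :
    pr p (fun ω => E ω ∧ Q (V ω)) = pr p E * pr p (fun ω => Q (V ω)) := by
  rw [pr_comp_eq_sum V, Finset.mul_sum, ← sum_pr_and_eq _ V]
  refine Finset.sum_congr rfl fun v _ => ?_
  split_ifs with hv
  · rw [← hEV]
    exact pr_congr fun ω => ⟨fun h => ⟨h.1.1, h.2⟩, fun h => ⟨⟨h.1, h.2 ▸ hv⟩, h.2⟩⟩
  · rw [mul_zero]
    simp only [pr]
    exact Finset.sum_eq_zero fun ω _ => if_neg fun ⟨⟨_, hQ⟩, hV⟩ => hv (hV ▸ hQ)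

theorem condMI_eq_zero_of_factor {α β γ : Type} [Fintype α] [Fintype β] [Fintype γ]
    (A : Ω → α) (B : Ω → β) (C : Ω → γ) (g : α → γ → ℝ) (f : β → γ → ℝ)
    (h : ∀ a b c, pr p (fun ω => A ω = a ∧ B ω = b ∧ C ω = c) = g a c * f b c) :
    condMI p A B C = 0 := by
  refine Finset.sum_eq_zero fun a _ => Finset.sum_eq_zero fun b _ =>
    Finset.sum_eq_zero fun c _ => ?_
  have hAC : ∀ a, pr p (fun ω => A ω = a ∧ C ω = c) = g a c * ∑ b, f b c := fun a => by
    rw [← sum_pr_and_eq _ B, Finset.mul_sum]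
    exact Finset.sum_congr rfl fun b _ => (pr_congr fun ω => by tauto).trans (h a b c)
  have hBC : pr p (fun ω => B ω = b ∧ C ω = c) = (∑ a, g a c) * f b c := by
    rw [← sum_pr_and_eq _ A, Finset.sum_mul]
    exact Finset.sum_congr rfl fun a _ => (pr_congr fun ω => by tauto).trans (h a b c)
  have hC : pr p (fun ω => C ω = c) = (∑ a, g a c) * ∑ b, f b c := by
    rw [← sum_pr_and_eq _ A, Finset.sum_mul]
    exact Finset.sum_congr rfl fun a _ => (pr_congr fun ω => by tauto).trans (hAC a)
  -- the ratio inside the logarithm is `x / x`, which is `1` or (junk) `0`; both have `logb = 0`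
  have hratio : pr p (fun ω => C ω = c) * pr p (fun ω => A ω = a ∧ B ω = b ∧ C ω = c)
      = pr p (fun ω => A ω = a ∧ C ω = c) * pr p (fun ω => B ω = b ∧ C ω = c) := by
    rw [hC, h, hAC, hBC]
    ring
  rw [hratio]
  rcases eq_or_ne (pr p (fun ω => A ω = a ∧ C ω = c) * pr p (fun ω => B ω = b ∧ C ω = c)) 0
    with hx | hx <;> simp [hx]

end Probability

namespace Alg

variable {Ω : Type} [Fintype Ω] {p : Ω → ℝ} {𝒳 : Type} [Fintype 𝒳] {n k : ℕ}
  {X : ℕ → Ω → 𝒳} (M : Alg Ω p 𝒳 n k X)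

/-- Column `u` of the table read by the algorithm: the input `X u` together with the private
randomness that every pass uses at step `u`. -/
def columns (ω : Ω) : Fin n → 𝒳 × (Fin k → M.Rv) :=
  fun u => (X u ω, fun t => M.R t u ω)

def step (i j : ℕ) (s : M.S) (z : Fin n → 𝒳 × (Fin k → M.Rv)) : M.S :=
  if h : j < n ∧ i < k then M.f i j (z ⟨j, h.1⟩).1 s ((z ⟨j, h.1⟩).2 ⟨i, h.2⟩) else s

/-- `M.runFrom i a s z l`: the state of pass `i` after the steps `a, …, a + l - 1`, started in
state `s` at position `a`, on the table of columns `z`. -/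
def runFrom (i a : ℕ) (s : M.S) (z : Fin n → 𝒳 × (Fin k → M.Rv)) : ℕ → M.S
  | 0 => s
  | l + 1 => M.step i (a + l) (runFrom i a s z l) z

theorem runFrom_congr (i a : ℕ) (s : M.S) {z z' : Fin n → 𝒳 × (Fin k → M.Rv)} (l : ℕ)
    (h : ∀ u : Fin n, a ≤ u → u < a + l → z u = z' u) :
    M.runFrom i a s z l = M.runFrom i a s z' l := by
  induction l with
  | zero => rfl
  | succ l ih =>
    simp only [runFrom, step, ih fun u h₁ h₂ => h u h₁ (by omega)]
    split_ifs with hj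
    · rw [h ⟨a + l, hj.1⟩ (by simp) (by simp)]
    · rfl

theorem runPass_add (i : ℕ) (ini : Ω → M.S) (a l : ℕ) (ω : Ω) :
    M.runPass i ini (a + l) ω = M.runFrom i a (M.runPass i ini a ω) (M.columns ω) l := by
  induction l with
  | zero => rfl
  | succ l ih =>
    rw [← Nat.add_assoc, runFrom, step, runPass]
    dsimp only
    rw [ih]
    split_ifs <;> rfl

theorem st_eq_runFrom (i J : ℕ) (ω : Ω) :
    M.st i J ω = M.runFrom i 0 (M.passEnd i ω) (M.columns ω) J := by
  have h := M.runPass_add i (M.passEnd i) 0 J ω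
  rwa [Nat.zero_add] at h

theorem passEnd_succ_eq_runFrom (i : ℕ) {J : ℕ} (hJ : J ≤ n) (ω : Ω) :
    M.passEnd (i + 1) ω = M.runFrom i J (M.st i J ω) (M.columns ω) (n - J) := by
  rw [st, ← runPass_add, Nat.add_sub_cancel' hJ, passEnd]

/-- The first `J` steps of passes `0, …, i` on the table `z`, started in the pass-start states
`c.1`, reach the mid-pass states `c.2` (and `b` for pass `i`). -/
def IsPrefixRun (i J : ℕ) (c : (Fin (i + 1) → M.S) × (Fin i → M.S)) (b : M.S)
    (z : Fin n → 𝒳 × (Fin k → M.Rv)) : Prop :=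
  (∀ r : Fin i, M.runFrom r 0 (c.1 r.castSucc) z J = c.2 r) ∧
    M.runFrom i 0 (c.1 (Fin.last i)) z J = b

/-- The remaining steps of passes `0, …, i - 1` on the table `z`, started in the mid-pass states
`c.2`, reach the next pass-start states. -/
def IsSuffixRun (i J : ℕ) (c : (Fin (i + 1) → M.S) × (Fin i → M.S))
    (z : Fin n → 𝒳 × (Fin k → M.Rv)) : Prop :=
  ∀ r : Fin i, M.runFrom r J (c.2 r) z (n - J) = c.1 r.succ

theorem passEnd_st_eq_iff {i J : ℕ} (hJ : J ≤ n) (c : (Fin (i + 1) → M.S) × (Fin i → M.S))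
    (b : M.S) (ω : Ω) :
    ((fun r : Fin (i + 1) => M.passEnd r ω), (fun r : Fin i => M.st r J ω)) = c ∧
        M.st i J ω = b ↔
      M.init ω = c.1 0 ∧ M.IsPrefixRun i J c b (M.columns ω) ∧
        M.IsSuffixRun i J c (M.columns ω) := by
  simp only [Prod.ext_iff, funext_iff]
  constructor
  · rintro ⟨⟨hpe, hst⟩, hb⟩
    refine ⟨hpe 0, ⟨fun r => ?_, ?_⟩, fun r => ?_⟩
    · rw [← hpe r.castSucc, ← hst r, st_eq_runFrom, Fin.val_castSucc]
    · rw [← hpe (Fin.last i), ← hb, st_eq_runFrom, Fin.val_last]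
    · rw [← hst r, ← hpe r.succ, Fin.val_succ, passEnd_succ_eq_runFrom _ _ hJ]
  · rintro ⟨h0, ⟨hpre, hlast⟩, hsuf⟩
    have hst : ∀ r : Fin i, M.passEnd r ω = c.1 r.castSucc → M.st r J ω = c.2 r :=
      fun r hr => by rw [st_eq_runFrom, hr, hpre]
    have hpe : ∀ r : Fin (i + 1), M.passEnd r ω = c.1 r := by
      intro r
      induction r using Fin.induction with
      | zero => exact h0
      | succ r ih => rw [Fin.val_succ, passEnd_succ_eq_runFrom _ _ hJ, hst r ih, hsuf r]
    refine ⟨⟨hpe, fun r => hst r (hpe r.castSucc)⟩, ?_⟩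
    have hlast' := hpe (Fin.last i)
    rw [Fin.val_last] at hlast'
    rw [st_eq_runFrom, hlast', hlast]

theorem isPrefixRun_congr {i J : ℕ} {c : (Fin (i + 1) → M.S) × (Fin i → M.S)} {b : M.S}
    {z z' : Fin n → 𝒳 × (Fin k → M.Rv)} (h : ∀ u : Fin n, (u : ℕ) < J → z u = z' u) :
    M.IsPrefixRun i J c b z ↔ M.IsPrefixRun i J c b z' := by
  have hrun : ∀ t s, M.runFrom t 0 s z J = M.runFrom t 0 s z' J := fun t s =>
    M.runFrom_congr t 0 s J fun u _ hu => h u (by omega)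
  simp only [IsPrefixRun, hrun]

theorem isSuffixRun_congr {i J : ℕ} {c : (Fin (i + 1) → M.S) × (Fin i → M.S)}
    {z z' : Fin n → 𝒳 × (Fin k → M.Rv)} (h : ∀ u : Fin n, J ≤ u → z u = z' u) :
    M.IsSuffixRun i J c z ↔ M.IsSuffixRun i J c z' := by
  have hrun : ∀ t s, M.runFrom t J s z (n - J) = M.runFrom t J s z' (n - J) := fun t s =>
    M.runFrom_congr t J s (n - J) fun u hu _ => h u hu
  simp only [IsSuffixRun, hrun]

def columnWeight (u : Fin n) (y : 𝒳 × (Fin k → M.Rv)) : ℝ :=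
  pr p (fun ω => X u ω = y.1) * ∏ t : Fin k, pr p (fun ω => M.R t u ω = y.2 t)

theorem pr_init_and_columns_eq [Nonempty Ω] (hprod : IsProduct p n X) (m : M.S)
    (z : Fin n → 𝒳 × (Fin k → M.Rv)) :
    pr p (fun ω => M.init ω = m ∧ M.columns ω = z) =
      pr p (fun ω => M.init ω = m) * ∏ u, M.columnWeight u (z u) := by
  let ω₀ : Ω := Classical.arbitrary Ω
  let r : ℕ → ℕ → M.Rv := fun t u =>
    if h : t < k ∧ u < n then (z ⟨u, h.2⟩).2 ⟨t, h.1⟩ else M.R t u ω₀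
  let x : ℕ → 𝒳 := fun u => if h : u < n then (z ⟨u, h⟩).1 else X u ω₀
  have hiff : ∀ ω, (M.init ω = m ∧ M.columns ω = z) ↔
      (M.init ω = m ∧ (∀ t < k, ∀ u < n, M.R t u ω = r t u) ∧ ∀ u < n, X u ω = x u) := by
    intro ω
    simp only [columns, funext_iff, Prod.ext_iff, Fin.forall_iff]
    refine and_congr_right fun _ => ⟨fun h => ⟨fun t ht u hu => ?_, fun u hu => ?_⟩, ?_⟩
    · simp [r, ht, hu, (h u hu).2 t ht]
    · simp [x, hu, (h u hu).1]
    · rintro ⟨hR, hX⟩ u hu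
      exact ⟨by simpa [x, hu] using hX u hu, fun t ht => by simpa [r, ht, hu] using hR t ht u hu⟩
  rw [pr_congr hiff, M.indep, hprod]
  simp only [Finset.prod_range, Fin.is_lt, and_self, dif_pos, Fin.eta, r, x, columnWeight]
  rw [mul_assoc, Finset.prod_comm, ← Finset.prod_mul_distrib]
  exact congrArg _ (Finset.prod_congr rfl fun _ _ => mul_comm _ _)

theorem pr_columns_eq (hp : IsPMF p) (hprod : IsProduct p n X)
    (z : Fin n → 𝒳 × (Fin k → M.Rv)) :
    pr p (fun ω => M.columns ω = z) = ∏ u, M.columnWeight u (z u) := by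
  have := hp.nonempty
  rw [← sum_pr_and_eq _ M.init]
  simp only [pr_congr fun ω => and_comm (a := M.columns ω = z), pr_init_and_columns_eq M hprod,
    ← Finset.sum_mul, sum_pr_eq_one hp, one_mul]

theorem pr_init_and_columns_eq_mul (hp : IsPMF p) (hprod : IsProduct p n X) (m : M.S)
    (z : Fin n → 𝒳 × (Fin k → M.Rv)) :
    pr p (fun ω => M.init ω = m ∧ M.columns ω = z) =
      pr p (fun ω => M.init ω = m) * pr p (fun ω => M.columns ω = z) := by
  have := hp.nonempty
  rw [pr_init_and_columns_eq M hprod, pr_columns_eq M hp hprod]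

end Alg

/-- Indices are shifted by one: the paper's `X_j` is `X (j-1)`, `M_{(i+1,j-1)}` is
`M.st i (j-1)`, and `M_r` is `M.passEnd r`. -/
theorem next_pass_prev_state_indep
    {Ω : Type} [Fintype Ω] {p : Ω → ℝ} {𝒳 : Type} [Fintype 𝒳] {n k : ℕ}
    {X : ℕ → Ω → 𝒳}
    (hp : IsPMF p) (hprod : IsProduct p n X)
    (M : Alg Ω p 𝒳 n k X) :
    ∀ i : ℕ, i < k → ∀ j : ℕ, 1 ≤ j → j ≤ n →
      condMI p
        (X (j - 1))
        (M.st i (j - 1))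
        (fun ω => ((fun r : Fin (i + 1) => M.passEnd r.1 ω),
                   (fun r : Fin i => M.st r.1 (j - 1) ω))) = 0 := by
  intro i _ j hj hjn
  have hJ : j - 1 < n := by omega
  let Head := M.IsPrefixRun i (j - 1)
  let Tail := fun c a (z : Fin n → 𝒳 × (Fin k → M.Rv)) =>
    (z ⟨j - 1, hJ⟩).1 = a ∧ M.IsSuffixRun i (j - 1) c z
  refine condMI_eq_zero_of_factor _ _ _ (fun a c => pr p fun ω => Tail c a (M.columns ω))
    (fun b c => pr p (fun ω => M.init ω = c.1 0) * pr p fun ω => Head c b (M.columns ω))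
    fun a b c => ?_
  calc pr p (fun ω => X (j - 1) ω = a ∧ M.st i (j - 1) ω = b ∧
        ((fun r : Fin (i + 1) => M.passEnd r.1 ω), (fun r : Fin i => M.st r.1 (j - 1) ω)) = c)
      = pr p (fun ω => M.init ω = c.1 0 ∧ (Head c b (M.columns ω) ∧ Tail c a (M.columns ω))) :=
        pr_congr fun ω => by
          have := M.passEnd_st_eq_iff hJ.le c b ω
          simp only [Head, Tail]
          tauto
    _ = pr p (fun ω => M.init ω = c.1 0) *
          (pr p (fun ω => Head c b (M.columns ω)) * pr p (fun ω => Tail c a (M.columns ω))) := by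
        rw [pr_and_comp_eq_mul _ _ (M.pr_init_and_columns_eq_mul hp hprod _)
            (fun z => Head c b z ∧ Tail c a z),
          pr_and_eq_mul_of_pi_law hp _ _ (M.pr_columns_eq hp hprod) (fun u => (u : ℕ) < j - 1)
            (Head c b) (Tail c a)]
        · exact fun z z' h => M.isPrefixRun_congr h
        · exact fun z z' h => and_congr (by rw [h ⟨j - 1, hJ⟩ (lt_irrefl _)])
            (M.isSuffixRun_congr fun u hu => h u (not_lt.2 hu))
    _ = _ := by ring

end MultiPassIC
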